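/- For a weakly decreasing sequence of nonnegative integers λ_1 ≥ ... ≥ λ_n ≥ 0, the quantity Π_{1 ≤ i < j ≤ n} [((λ_i + n - i)^2 - (λ_j + n - j)^2)/((n-i)^2 - (n-j)^2)] equals 2^{n-1} times the determinant of the n×n matrix whose (i,j)-entry is C(λ_i - i + 2n - j - 1/2, 2n - 2j), where C(x,k) is the generalized binomial coefficient. -/

import Mathlib

/-- Generalized binomial coefficient `C(x,k) = x(x-1)⋯(x-k+1)/k!`. -/
def gchoose (x : ℚ) (k : ℕ) : ℚ :=
  (∏ i ∈ Finset.range k, (x - i)) / (Nat.factorial k)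

open Finset Polynomial

/-- pairing lemma for the falling product -/
lemma gchoose_pair (x : ℚ) (k : ℕ) :
    (∏ i ∈ Finset.range (2*k), (x + k - 1/2 - i)) =
    ∏ j ∈ Finset.range k, (x^2 - ((j:ℚ)+1/2)^2) := by
  induction k with
  | zero => simp
  | succ k ih =>
    have h2 : 2*(k+1) = (2*k+1)+1 := by ring
    rw [h2, Finset.prod_range_succ, Finset.prod_range_succ', Finset.prod_range_succ]
    have hmid : (∏ i ∈ Finset.range (2*k), (x + (k+1:ℕ) - 1/2 - ((i:ℕ)+1 : ℕ)))
        = ∏ i ∈ Finset.range (2*k), (x + (k:ℕ) - 1/2 - i) := by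
      apply Finset.prod_congr rfl
      intro i _
      push_cast
      ring
    rw [hmid, ih]
    push_cast
    ring

lemma sum_min_one (n : ℕ) : (∑ i ∈ Finset.range n, min i 1) = n - 1 := by
  induction n with
  | zero => simp
  | succ n ih =>
    rw [Finset.sum_range_succ, ih]
    omega

lemma asc_shift (m : ℕ) :
    (∏ a ∈ Finset.range m, (m+1+a)) * m = (∏ a ∈ Finset.range m, (m+a)) * (2*m) := by
  have h1 := Finset.prod_range_succ (fun a => m + a) m
  have h2 := Finset.prod_range_succ' (fun a => m + a) m
  have : (∏ a ∈ Finset.range m, (m+1+a)) * m = ∏ a ∈ Finset.range (m+1), (m+a) := by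
    rw [h2]; congr 1; apply Finset.prod_congr rfl; intro i _; ring
  rw [this, h1]; ring_nf

lemma ascFactorial_prod (n : ℕ) : ∀ k, n.ascFactorial k = ∏ i ∈ Finset.range k, (n + i)
  | 0 => by simp
  | (k+1) => by rw [Nat.ascFactorial_succ, Finset.prod_range_succ, ascFactorial_prod n k]; ring

lemma key_factorial (m : ℕ) :
    2 ^ (min m 1) * ∏ t ∈ Finset.range m, ((t+1)*(2*m-1-t)) = (2*m).factorial := by
  rcases Nat.eq_zero_or_pos m with hm | hm
  · subst hm; simp
  have hmin : min m 1 = 1 := by omega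
  rw [hmin, Finset.prod_mul_distrib, Finset.prod_range_add_one_eq_factorial]
  have hrefl : (∏ t ∈ Finset.range m, (2*m-1-t)) = ∏ t ∈ Finset.range m, (m+t) := by
    rw [← Finset.prod_range_reflect (fun t => m + t) m]
    apply Finset.prod_congr rfl
    intro i hi
    simp only [Finset.mem_range] at hi
    omega
  rw [hrefl]
  have hasc : m.factorial * (∏ a ∈ Finset.range m, (m+1+a)) = (2*m).factorial := by
    have := Nat.factorial_mul_ascFactorial m m
    rwa [ascFactorial_prod, show m + m = 2*m by ring] at this
  have := asc_shift m
  have hmul : (2 ^ 1 * (m.factorial * ∏ t ∈ Finset.range m, (m+t))) * m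
      = (2*m).factorial * m := by
    calc (2 ^ 1 * (m.factorial * ∏ t ∈ Finset.range m, (m+t))) * m
        = m.factorial * ((∏ t ∈ Finset.range m, (m+t)) * (2*m)) := by ring
      _ = m.factorial * ((∏ a ∈ Finset.range m, (m+1+a)) * m) := by rw [← asc_shift m]
      _ = (2*m).factorial * m := by rw [← hasc]; ring
  exact Nat.eq_of_mul_eq_mul_right hm hmul

/-- the column polynomial -/
noncomputable def Pcol (k : ℕ) : Polynomial ℚ :=
  ∏ t ∈ Finset.range k, (Polynomial.X - Polynomial.C (((t:ℚ)+1/2)^2))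

lemma Pcol_monic (k : ℕ) : (Pcol k).Monic :=
  monic_prod_of_monic _ _ (fun t _ => monic_X_sub_C _)

lemma Pcol_natDegree (k : ℕ) : (Pcol k).natDegree = k := by
  unfold Pcol
  rw [natDegree_prod_of_monic _ _ (fun t _ => monic_X_sub_C _)]
  simp only [natDegree_X_sub_C]
  simp

lemma Pcol_eval (k : ℕ) (y : ℚ) :
    (Pcol k).eval y = ∏ t ∈ Finset.range k, (y - ((t:ℚ)+1/2)^2) := by
  unfold Pcol
  simp [eval_prod]

/-- reversing pairs in a double product over Ioi -/
lemma prod_Ioi_rev {n : ℕ} (g : Fin n → Fin n → ℚ) :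
    (∏ i : Fin n, ∏ j ∈ Finset.Ioi i, g (Fin.rev j) (Fin.rev i)) =
    ∏ i : Fin n, ∏ j ∈ Finset.Ioi i, g i j := by
  rw [Finset.prod_sigma', Finset.prod_sigma']
  refine Finset.prod_bij' (fun p _ => ⟨Fin.rev p.2, Fin.rev p.1⟩)
    (fun p _ => ⟨Fin.rev p.2, Fin.rev p.1⟩) ?_ ?_ ?_ ?_ ?_ <;>
    simp [Fin.rev_lt_rev, Fin.rev_rev]

lemma cast_sub_sub {n k : ℕ} (h : k < n) : ((n-1-k:ℕ):ℚ) = (n:ℚ)-1-k := by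
  have h1 : n - 1 - k = n - (1+k) := by omega
  rw [h1, Nat.cast_sub (by omega)]
  push_cast; ring

lemma z_inner (n : ℕ) (i : Fin n) :
    (∏ j ∈ Finset.Ioi i, (((n:ℚ)-1-(i:ℕ))^2 - ((n:ℚ)-1-(j:ℕ))^2)) =
    ((∏ t ∈ Finset.range (n-1-(i:ℕ)), ((t+1)*(2*(n-1-(i:ℕ))-1-t)) : ℕ) : ℚ) := by
  rw [Nat.cast_prod]
  refine Finset.prod_bij' (fun j _ => (j:ℕ) - (i:ℕ) - 1)
    (fun t ht => ⟨(i:ℕ)+1+t, by simp only [Finset.mem_range] at ht; have := i.isLt; omega⟩)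
    ?_ ?_ ?_ ?_ ?_
  · intro j hj
    simp only [Finset.mem_Ioi, Fin.lt_def] at hj
    simp only [Finset.mem_range]
    have := j.isLt
    omega
  · intro t ht
    simp only [Finset.mem_range] at ht
    simp only [Finset.mem_Ioi, Fin.lt_def]
    omega
  · intro j hj
    simp only [Finset.mem_Ioi, Fin.lt_def] at hj
    apply Fin.ext
    simp only []
    omega
  · intro t ht
    simp only [Finset.mem_range] at ht
    simp only [Fin.val_mk]
    omega
  · intro j hj
    simp only [Finset.mem_Ioi, Fin.lt_def] at hj
    have hjn := j.isLt
    obtain ⟨t, ht⟩ : ∃ t, (j:ℕ) = (i:ℕ) + 1 + t := ⟨(j:ℕ) - (i:ℕ) - 1, by omega⟩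
    obtain ⟨s, hs⟩ : ∃ s, n = (j:ℕ) + 1 + s := ⟨n - (j:ℕ) - 1, by omega⟩
    have e1 : (j:ℕ) - (i:ℕ) - 1 = t := by omega
    have e2 : ((j:ℕ) - (i:ℕ) - 1 + 1) * (2*(n-1-(i:ℕ))-1-((j:ℕ)-(i:ℕ)-1))
        = (t+1)*(t+2*s+1) := by
      rw [show (j:ℕ) - (i:ℕ) - 1 + 1 = t+1 by omega,
        show 2*(n-1-(i:ℕ))-1-((j:ℕ)-(i:ℕ)-1) = t+2*s+1 by omega]
    rw [e2]
    have hn : n = (i:ℕ) + 1 + t + 1 + s := by omega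
    have e3 : (n:ℚ) = (i:ℕ) + 1 + t + 1 + s := by exact_mod_cast hn
    have e4 : ((j:ℕ):ℚ) = (i:ℕ) + 1 + t := by exact_mod_cast ht
    rw [e3, e4]
    push_cast
    ring

lemma prod_fin_reflect (n : ℕ) (f : ℕ → ℚ) :
    (∏ i : Fin n, f (n-1-(i:ℕ))) = ∏ k ∈ Finset.range n, f k := by
  rw [Fin.prod_univ_eq_prod_range (fun k => f (n-1-k)) n, Finset.prod_range_reflect]

lemma z_total (n : ℕ) :
    (2:ℚ)^(n-1) * ∏ i : Fin n, ∏ j ∈ Finset.Ioi i,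
        (((n:ℚ)-1-(i:ℕ))^2 - ((n:ℚ)-1-(j:ℕ))^2)
      = ∏ k ∈ Finset.range n, ((2*k).factorial : ℚ) := by
  rw [Finset.prod_congr rfl (fun i _ => z_inner n i)]
  have h2 : (2:ℚ)^(n-1) = ∏ i : Fin n, (2:ℚ)^(min (n-1-(i:ℕ)) 1) := by
    rw [Finset.prod_pow_eq_pow_sum]
    congr 1
    rw [Fin.sum_univ_eq_sum_range (fun k => min (n-1-k) 1) n,
      Finset.sum_range_reflect (fun k => min k 1) n, sum_min_one]
  rw [h2, ← Finset.prod_mul_distrib]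
  have h3 : ∀ i : Fin n, (2:ℚ)^(min (n-1-(i:ℕ)) 1) *
      ((∏ t ∈ Finset.range (n-1-(i:ℕ)), ((t+1)*(2*(n-1-(i:ℕ))-1-t)) : ℕ):ℚ)
      = ((2*(n-1-(i:ℕ))).factorial : ℚ) := by
    intro i
    exact_mod_cast congrArg (Nat.cast : ℕ → ℚ) (key_factorial (n-1-(i:ℕ)))
  rw [Finset.prod_congr rfl (fun i _ => h3 i)]
  exact prod_fin_reflect n (fun k => ((2*k).factorial : ℚ))

lemma det_side (n : ℕ) (x : Fin n → ℚ) :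
    Matrix.det (Matrix.of fun i j : Fin n =>
      (((2*(n-1-(j:ℕ))).factorial : ℚ))⁻¹ * (Pcol (n-1-(j:ℕ))).eval (x i ^ 2))
    = (∏ k ∈ Finset.range n, ((2*k).factorial : ℚ))⁻¹ *
      ∏ i : Fin n, ∏ j ∈ Finset.Ioi i, (x i ^ 2 - x j ^ 2) := by
  have h0 : (Matrix.of fun i j : Fin n =>
      (((2*(n-1-(j:ℕ))).factorial : ℚ))⁻¹ * (Pcol (n-1-(j:ℕ))).eval (x i ^ 2))
      = Matrix.of (fun i j : Fin n => (fun j : Fin n => (((2*(n-1-(j:ℕ))).factorial : ℚ))⁻¹) j *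
        (Matrix.of fun i j : Fin n => (Pcol (n-1-(j:ℕ))).eval (x i ^ 2)) i j) := rfl
  rw [h0, Matrix.det_mul_row]
  have h1 : (∏ j : Fin n, (fun j : Fin n => (((2*(n-1-(j:ℕ))).factorial : ℚ))⁻¹) j)
      = (∏ k ∈ Finset.range n, ((2*k).factorial : ℚ))⁻¹ := by
    rw [← Finset.prod_inv_distrib]
    exact prod_fin_reflect n (fun k => (((2*k).factorial : ℚ))⁻¹)
  rw [h1]
  congr 1
  have hB : (Matrix.of fun i j : Fin n => (Pcol (n-1-(j:ℕ))).eval (x i ^ 2))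
      = (Matrix.of fun i j : Fin n =>
          (Pcol (j:ℕ)).eval ((fun a : Fin n => x (Fin.rev a) ^ 2) i)).submatrix
          Fin.revPerm Fin.revPerm := by
    ext i j
    simp only [Matrix.submatrix_apply, Matrix.of_apply, Fin.revPerm_apply, Fin.rev_rev]
    congr 2
    rw [Fin.val_rev]
    omega
  rw [hB, Matrix.det_submatrix_equiv_self,
    ← Matrix.det_eval_matrixOfPolynomials_eq_det_vandermonde _
      (fun j : Fin n => Pcol (j:ℕ)) (fun j => Pcol_natDegree _) (fun j => Pcol_monic _),
    Matrix.det_vandermonde]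
  exact prod_Ioi_rev (fun a b => x a ^ 2 - x b ^ 2)

lemma entry_eq (n : ℕ) (lam : Fin n → ℕ) (i j : Fin n) :
    gchoose ((lam i : ℚ) + 2 * (n : ℚ) - (i : ℕ) - (j : ℕ) - 5/2) (2 * (n - 1 - (j : ℕ)))
    = (((2*(n-1-(j:ℕ))).factorial : ℚ))⁻¹ *
      (Pcol (n-1-(j:ℕ))).eval ((((lam i : ℚ) + (n:ℚ) - 1 - (i:ℕ))) ^ 2) := by
  have harg : (lam i : ℚ) + 2 * (n:ℚ) - (i:ℕ) - (j:ℕ) - 5/2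
      = ((lam i : ℚ) + (n:ℚ) - 1 - (i:ℕ)) + ((n-1-(j:ℕ) : ℕ):ℚ) - 1/2 := by
    rw [cast_sub_sub j.isLt]; ring
  rw [harg]
  unfold gchoose
  rw [gchoose_pair, Pcol_eval, div_eq_mul_inv, mul_comm]

theorem weyl_dim_so_even_det (n : ℕ) (lam : Fin n → ℕ)
    (hdec : ∀ i j : Fin n, i ≤ j → lam j ≤ lam i) :
    (∏ i : Fin n, ∏ j ∈ Finset.Ioi i,
        ((((lam i : ℚ) + (n : ℚ) - 1 - (i : ℕ)) ^ 2 -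
            ((lam j : ℚ) + (n : ℚ) - 1 - (j : ℕ)) ^ 2) /
          (((n : ℚ) - 1 - (i : ℕ)) ^ 2 - ((n : ℚ) - 1 - (j : ℕ)) ^ 2))) =
    2 ^ (n - 1) * Matrix.det (Matrix.of fun i j : Fin n =>
      gchoose ((lam i : ℚ) + 2 * (n : ℚ) - (i : ℕ) - (j : ℕ) - 5/2)
        (2 * (n - 1 - (j : ℕ)))) := by
  have hM : (Matrix.of fun i j : Fin n =>
      gchoose ((lam i : ℚ) + 2 * (n : ℚ) - (i : ℕ) - (j : ℕ) - 5/2)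
        (2 * (n - 1 - (j : ℕ))))
      = Matrix.of fun i j : Fin n =>
        (((2*(n-1-(j:ℕ))).factorial : ℚ))⁻¹ *
          (Pcol (n-1-(j:ℕ))).eval ((((lam i : ℚ) + (n:ℚ) - 1 - (i:ℕ))) ^ 2) := by
    ext i j
    exact entry_eq n lam i j
  have hd := det_side n (fun i : Fin n => (lam i : ℚ) + (n:ℚ) - 1 - (i:ℕ))
  beta_reduce at hd
  rw [hM, hd]
  simp only [Finset.prod_div_distrib]
  set Vy := ∏ i : Fin n, ∏ j ∈ Finset.Ioi i,
    (((lam i : ℚ) + (n:ℚ) - 1 - (i:ℕ)) ^ 2 - ((lam j : ℚ) + (n:ℚ) - 1 - (j:ℕ)) ^ 2) with hVy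
  set Dz := ∏ i : Fin n, ∏ j ∈ Finset.Ioi i,
    (((n:ℚ)-1-(i:ℕ))^2 - ((n:ℚ)-1-(j:ℕ))^2) with hDz
  set F := ∏ k ∈ Finset.range n, ((2*k).factorial : ℚ) with hF
  have hzt : (2:ℚ)^(n-1) * Dz = F := z_total n
  have hFne : F ≠ 0 := by
    rw [hF]
    apply Finset.prod_ne_zero_iff.mpr
    intro k _
    exact_mod_cast (Nat.factorial_ne_zero (2*k))
  have h2 : (2:ℚ)^(n-1) ≠ 0 := pow_ne_zero _ two_ne_zero
  have hDzne : Dz ≠ 0 := by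
    intro h
    rw [h, mul_zero] at hzt
    exact hFne hzt.symm
  rw [← hzt]
  field_simp
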